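/- Let (ψₙ)_{n∈ℕ} be a Hilbert (orthonormal) basis of L²(0,1), let (λₙ)_{n∈ℕ} be real numbers with λₙ ≥ 1, let p ∈ L¹(0,1) be real-valued, and set g(x) = exp(−(1/2)∫₀ˣ p(ξ) dξ). Let u₀, u₁ ∈ L²(0,1), Aₙ = ⟨g u₀, ψₙ⟩, Bₙ = ⟨g u₁, ψₙ⟩, and assume Σₙ λₙ |Aₙ|² < ∞. Then the L²(0,1)-valued map t ↦ v(t) = Σₙ ( Aₙ cos(λₙ^{1/2} t) + λₙ^{−1/2} Bₙ sin(λₙ^{1/2} t) ) ψₙ is differentiable on ℝ with derivative v'(t) = Σₙ ( −λₙ^{1/2} Aₙ sin(λₙ^{1/2} t) + Bₙ cos(λₙ^{1/2} t) ) ψₙ, and for every t ∈ ℝ, ‖g^{−1} · v'(t)‖²_{L²(0,1)} ≤ 2 exp(‖p‖_{L¹(0,1)}) ( Σₙ λₙ |Aₙ|² + Σₙ |Bₙ|² ). -/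

import Mathlib

/-!
Through the Hilbert basis, `v t` and `v' t` are the images of the coefficient sequences
`cₙ(t) = Aₙ cos(√λₙ t) + Bₙ sin(√λₙ t)/√λₙ` and their derivatives `cₙ'(t)` in `ℓ²`. Since
`|cₙ'(t)| ≤ √λₙ |Aₙ| + |Bₙ|`, a square-summable bound independent of `t`, the mean value theorem
and dominated convergence make the difference quotients of `c` converge to `c'` in `ℓ²`.
For the estimate, `exp(∫₀ˣ p) ≤ exp ‖p‖_{L¹}` on `(0,1)`, and by Parseval
`‖v' t‖² = Σₙ cₙ'(t)² ≤ 2 Σₙ (λₙ Aₙ² + Bₙ²)`.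
-/

open MeasureTheory Set Filter
open scoped RealInnerProductSpace Topology lp

lemma abs_slope_le_of_abs_deriv_le {f f' : ℝ → ℝ} {C : ℝ} (hf : ∀ x, HasDerivAt f (f' x) x)
    (hC : ∀ x, |f' x| ≤ C) (t s : ℝ) : |slope f t s| ≤ C := by
  rcases eq_or_ne s t with rfl | hst
  · simpa using (abs_nonneg _).trans (hC s)
  have hmvt : ‖f s - f t‖ ≤ C * ‖s - t‖ :=
    convex_univ.norm_image_sub_le_of_norm_hasDerivWithin_le (fun x _ => (hf x).hasDerivWithinAt)
      (fun x _ => hC x) (mem_univ t) (mem_univ s)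
  rw [slope_def_field, abs_div, div_le_iff₀ (abs_pos.2 (sub_ne_zero.2 hst))]
  simpa using hmvt

namespace lp

variable {ι : Type*}

lemma hasSum_sq (x : ℓ²(ι, ℝ)) : HasSum (fun i => x i ^ 2) (‖x‖ ^ 2) := by
  simpa using lp.hasSum_norm (p := 2) (by norm_num) x

lemma memℓp_two_of_summable_sq {f : ι → ℝ} (hf : Summable fun i => f i ^ 2) : Memℓp f 2 :=
  memℓp_gen (by simpa using hf)

lemma norm_sq_le_tsum {x : ℓ²(ι, ℝ)} {b : ι → ℝ} (hb : Summable b) (hxb : ∀ i, x i ^ 2 ≤ b i) :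
    ‖x‖ ^ 2 ≤ ∑' i, b i :=
  (hasSum_sq x).tsum_eq ▸ (hasSum_sq x).summable.tsum_le_tsum hxb hb

theorem hasDerivAt_of_hasDerivAt_coord (a a' : ℝ → ι → ℝ) (ha : ∀ s, Memℓp (a s) 2)
    (ha' : ∀ s, Memℓp (a' s) 2) (hd : ∀ i s, HasDerivAt (a · i) (a' s i) s)
    {u : ι → ℝ} (hu : Summable fun i => u i ^ 2) (hbound : ∀ i s, |a' s i| ≤ u i) (t : ℝ) :
    HasDerivAt (fun s => (⟨a s, ha s⟩ : ℓ²(ι, ℝ))) ⟨a' t, ha' t⟩ t := by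
  set e : ℝ → ι → ℝ := fun s i => slope (a · i) t s - a' t i
  have he_sq : ∀ s i, e s i ^ 2 ≤ (2 * u i) ^ 2 := fun s i => by
    refine sq_le_sq' ?_ ?_ <;>
    linarith [abs_le.1 (abs_slope_le_of_abs_deriv_le (hd i) (hbound i) t s),
      abs_le.1 (hbound i t)]
  have he_lim : ∀ i, Tendsto (fun s => e s i ^ 2) (𝓝[≠] t) (𝓝 0) := fun i => by
    simpa using ((hasDerivAt_iff_tendsto_slope.1 (hd i t)).sub_const (a' t i)).pow 2
  have hsum : Tendsto (fun s => ∑' i, e s i ^ 2) (𝓝[≠] t) (𝓝 0) := by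
    simpa using tendsto_tsum_of_dominated_convergence (hu.mul_left 4) he_lim
      (Eventually.of_forall fun s i => by
        rw [Real.norm_eq_abs, abs_sq]; linarith [he_sq s i])
  have hnorm : ∀ s, ‖slope (fun s => (⟨a s, ha s⟩ : ℓ²(ι, ℝ))) t s - ⟨a' t, ha' t⟩‖ ^ 2 =
      ∑' i, e s i ^ 2 := fun s => by
    rw [← (hasSum_sq _).tsum_eq]
    rfl
  rw [hasDerivAt_iff_tendsto_slope, tendsto_iff_norm_sub_tendsto_zero]
  simpa [Function.comp_def, ← hnorm] using (Real.continuous_sqrt.tendsto 0).comp hsum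

end lp

/-- Coefficient of the solution of `y'' + l y = 0`, `y(0) = a`, `y'(0) = b`. -/
noncomputable def waveCoeff (l a b t : ℝ) : ℝ :=
  a * Real.cos (Real.sqrt l * t) + (Real.sqrt l)⁻¹ * b * Real.sin (Real.sqrt l * t)

noncomputable def waveCoeffDeriv (l a b t : ℝ) : ℝ :=
  -Real.sqrt l * a * Real.sin (Real.sqrt l * t) + b * Real.cos (Real.sqrt l * t)

section waveCoeff

variable {l : ℝ} (a b t : ℝ)

lemma hasDerivAt_waveCoeff (hl : 0 < l) :
    HasDerivAt (waveCoeff l a b) (waveCoeffDeriv l a b t) t := by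
  have hlin : HasDerivAt (Real.sqrt l * ·) (Real.sqrt l) t := by
    simpa using (hasDerivAt_id t).const_mul (Real.sqrt l)
  refine ((hlin.cos.const_mul a).add (hlin.sin.const_mul _)).congr_deriv ?_
  have hsqrt : (Real.sqrt l)⁻¹ * Real.sqrt l = 1 := inv_mul_cancel₀ (Real.sqrt_pos.2 hl).ne'
  simp only [waveCoeffDeriv]
  linear_combination b * Real.cos (Real.sqrt l * t) * hsqrt

lemma abs_waveCoeffDeriv_le : |waveCoeffDeriv l a b t| ≤ Real.sqrt l * |a| + |b| := by
  have hsin := Real.abs_sin_le_one (Real.sqrt l * t)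
  have hcos := Real.abs_cos_le_one (Real.sqrt l * t)
  calc |waveCoeffDeriv l a b t|
      ≤ |-Real.sqrt l * a * Real.sin (Real.sqrt l * t)| + |b * Real.cos (Real.sqrt l * t)| :=
        abs_add_le _ _
    _ ≤ Real.sqrt l * |a| * 1 + |b| * 1 := by
        rw [abs_mul, abs_mul, abs_mul, abs_neg, abs_of_nonneg (Real.sqrt_nonneg l)]
        gcongr
    _ = Real.sqrt l * |a| + |b| := by ring

lemma sq_sqrt_mul_abs_add_abs_le (hl : 0 ≤ l) :
    (Real.sqrt l * |a| + |b|) ^ 2 ≤ 2 * (l * a ^ 2 + b ^ 2) := by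
  simpa [mul_pow, Real.sq_sqrt hl] using add_sq_le (a := Real.sqrt l * |a|) (b := |b|)

lemma sq_waveCoeffDeriv_le (hl : 0 ≤ l) :
    waveCoeffDeriv l a b t ^ 2 ≤ 2 * (l * a ^ 2 + b ^ 2) := by
  obtain ⟨hlo, hhi⟩ := abs_le.1 (abs_waveCoeffDeriv_le a b t)
  exact (sq_le_sq' hlo hhi).trans (sq_sqrt_mul_abs_add_abs_le a b hl)

lemma sq_waveCoeff_le (hl : 1 ≤ l) : waveCoeff l a b t ^ 2 ≤ 2 * (a ^ 2 + b ^ 2) := by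
  have hsin := Real.abs_sin_le_one (Real.sqrt l * t)
  have hcos := Real.abs_cos_le_one (Real.sqrt l * t)
  have hinv : (Real.sqrt l)⁻¹ ≤ 1 := inv_le_one_of_one_le₀ (Real.one_le_sqrt.2 hl)
  have habs : |waveCoeff l a b t| ≤ |a| + |b| :=
    calc |waveCoeff l a b t|
        ≤ |a * Real.cos (Real.sqrt l * t)| + |(Real.sqrt l)⁻¹ * b * Real.sin (Real.sqrt l * t)| :=
          abs_add_le _ _
      _ ≤ |a| * 1 + 1 * |b| * 1 := by
          rw [abs_mul, abs_mul, abs_mul, abs_of_nonneg (inv_nonneg.2 (Real.sqrt_nonneg l))]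
          gcongr
      _ = |a| + |b| := by ring
  obtain ⟨hlo, hhi⟩ := abs_le.1 habs
  simpa using (sq_le_sq' hlo hhi).trans (add_sq_le (a := |a|) (b := |b|))

end waveCoeff

section waveSeries

variable {ι : Type*} {lam A B : ι → ℝ}

lemma memℓp_waveCoeff (hlam : ∀ i, 1 ≤ lam i) (hA : Summable fun i => A i ^ 2)
    (hB : Summable fun i => B i ^ 2) (t : ℝ) :
    Memℓp (fun i => waveCoeff (lam i) (A i) (B i) t) 2 :=
  lp.memℓp_two_of_summable_sq <| ((hA.add hB).mul_left 2).of_nonneg_of_le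
    (fun _ => sq_nonneg _) fun i => sq_waveCoeff_le _ _ t (hlam i)

lemma memℓp_waveCoeffDeriv (hlam : ∀ i, 0 ≤ lam i) (hA : Summable fun i => lam i * A i ^ 2)
    (hB : Summable fun i => B i ^ 2) (t : ℝ) :
    Memℓp (fun i => waveCoeffDeriv (lam i) (A i) (B i) t) 2 :=
  lp.memℓp_two_of_summable_sq <| ((hA.add hB).mul_left 2).of_nonneg_of_le
    (fun _ => sq_nonneg _) fun i => sq_waveCoeffDeriv_le _ _ t (hlam i)

lemma hasDerivAt_waveCoeff_lp (hlam : ∀ i, 1 ≤ lam i) (hA : Summable fun i => A i ^ 2)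
    (hA' : Summable fun i => lam i * A i ^ 2) (hB : Summable fun i => B i ^ 2) (t : ℝ) :
    HasDerivAt (fun s => (⟨_, memℓp_waveCoeff hlam hA hB s⟩ : ℓ²(ι, ℝ)))
      ⟨_, memℓp_waveCoeffDeriv (fun i => zero_le_one.trans (hlam i)) hA' hB t⟩ t :=
  lp.hasDerivAt_of_hasDerivAt_coord _ _ _ _
    (fun i s => hasDerivAt_waveCoeff _ _ s (zero_lt_one.trans_le (hlam i)))
    (((hA'.add hB).mul_left 2).of_nonneg_of_le (fun _ => sq_nonneg _)
      fun i => sq_sqrt_mul_abs_add_abs_le _ _ (zero_le_one.trans (hlam i)))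
    (fun _ s => abs_waveCoeffDeriv_le _ _ s) t

lemma norm_sq_waveCoeffDeriv_lp_le (hlam : ∀ i, 0 ≤ lam i)
    (hA : Summable fun i => lam i * A i ^ 2) (hB : Summable fun i => B i ^ 2) (t : ℝ) :
    ‖(⟨_, memℓp_waveCoeffDeriv hlam hA hB t⟩ : ℓ²(ι, ℝ))‖ ^ 2 ≤
      2 * (∑' i, lam i * A i ^ 2 + ∑' i, B i ^ 2) := by
  rw [← hA.tsum_add hB, ← tsum_mul_left]
  exact lp.norm_sq_le_tsum ((hA.add hB).mul_left 2) fun i => sq_waveCoeffDeriv_le _ _ t (hlam i)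

end waveSeries

lemma intervalIntegral_le_setIntegral_abs {p : ℝ → ℝ} {s : Set ℝ} (hp : IntegrableOn p s)
    {a x : ℝ} (hax : a ≤ x) (hs : Ioc a x ⊆ s) : ∫ y in a..x, p y ≤ ∫ y in s, |p y| :=
  calc ∫ y in a..x, p y ≤ ∫ y in a..x, |p y| :=
        (le_abs_self _).trans (intervalIntegral.abs_integral_le_integral_abs hax)
    _ = ∫ y in Ioc a x, |p y| := intervalIntegral.integral_of_le hax
    _ ≤ ∫ y in s, |p y| :=
        setIntegral_mono_set hp.abs (ae_of_all _ fun _ => abs_nonneg _) hs.eventuallyLE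

namespace MeasureTheory.Lp

variable {α : Type*} [MeasurableSpace α] {μ : Measure α}

lemma integral_sq_eq_norm_sq (f : Lp ℝ 2 μ) : ∫ x, f x ^ 2 ∂μ = ‖f‖ ^ 2 := by
  rw [← real_inner_self_eq_norm_sq, L2.inner_def]
  simp_rw [RCLike.inner_apply, RCLike.conj_to_real, sq]

lemma integral_sq_le_of_ae_eq_mul (f : Lp ℝ 2 μ) {c w : α → ℝ} {C : ℝ}
    (hc : ∀ᵐ x ∂μ, c x ^ 2 ≤ C) (hw : ∀ᵐ x ∂μ, w x = c x * f x) :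
    ∫ x, w x ^ 2 ∂μ ≤ C * ‖f‖ ^ 2 := by
  rw [← integral_sq_eq_norm_sq, ← integral_const_mul]
  refine integral_mono_of_nonneg (ae_of_all _ fun _ => sq_nonneg _)
    ((Lp.memLp f).integrable_sq.const_mul C) ?_
  filter_upwards [hc, hw] with x hcx hwx
  rw [hwx, mul_pow]
  exact mul_le_mul_of_nonneg_right hcx (sq_nonneg _)

end MeasureTheory.Lp

theorem stmt_10_general
    (ψ : HilbertBasis ℕ ℝ (Lp ℝ 2 (volume.restrict (Ioo (0:ℝ) 1))))
    (lam : ℕ → ℝ) (hlam : ∀ n, 1 ≤ lam n)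
    (p : ℝ → ℝ) (hp : IntegrableOn p (Ioo (0:ℝ) 1))
    (gu₁ : Lp ℝ 2 (volume.restrict (Ioo (0:ℝ) 1)))
    (A B : ℕ → ℝ)
    (hB : ∀ n, B n = ⟪gu₁, ψ n⟫)
    (hA2 : Summable fun n => lam n * (A n) ^ 2)
    (v v' : ℝ → Lp ℝ 2 (volume.restrict (Ioo (0:ℝ) 1)))
    (hv : ∀ t, v t = ∑' n,
      (A n * Real.cos (Real.sqrt (lam n) * t)
        + (Real.sqrt (lam n))⁻¹ * B n * Real.sin (Real.sqrt (lam n) * t)) • ψ n)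
    (hv' : ∀ t, v' t = ∑' n,
      (-(Real.sqrt (lam n)) * A n * Real.sin (Real.sqrt (lam n) * t)
        + B n * Real.cos (Real.sqrt (lam n) * t)) • ψ n)
    (w : ℝ → ℝ → ℝ)
    (hw : ∀ t, ∀ᵐ x ∂(volume.restrict (Ioo (0:ℝ) 1)),
      w t x = Real.exp ((1/2) * ∫ s in (0:ℝ)..x, p s) * (v' t) x) :
    (∀ t, HasDerivAt v (v' t) t) ∧
    ∀ t, (∫ x in Ioo (0:ℝ) 1, (w t x) ^ 2) ≤
      2 * Real.exp (∫ x in Ioo (0:ℝ) 1, |p x|) *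
        ((∑' n, lam n * (A n) ^ 2) + ∑' n, (B n) ^ 2) := by
  have hlam₀ : ∀ n, 0 ≤ lam n := fun n => zero_le_one.trans (hlam n)
  have hA : Summable fun n => A n ^ 2 := hA2.of_nonneg_of_le (fun _ => sq_nonneg _)
    fun n => le_mul_of_one_le_left (sq_nonneg _) (hlam n)
  have hB2 : Summable fun n => B n ^ 2 := by
    simpa [hB, real_inner_comm] using ψ.orthonormal.inner_products_summable (x := gu₁)
  have hv_repr : ∀ t, v t = ψ.repr.symm ⟨_, memℓp_waveCoeff hlam hA hB2 t⟩ := fun t =>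
    (hv t).trans (ψ.hasSum_repr_symm ⟨_, memℓp_waveCoeff hlam hA hB2 t⟩).tsum_eq
  have hv'_repr : ∀ t, v' t = ψ.repr.symm ⟨_, memℓp_waveCoeffDeriv hlam₀ hA2 hB2 t⟩ := fun t =>
    (hv' t).trans (ψ.hasSum_repr_symm ⟨_, memℓp_waveCoeffDeriv hlam₀ hA2 hB2 t⟩).tsum_eq
  refine ⟨fun t => ?_, fun t => ?_⟩
  · rw [funext hv_repr, hv'_repr]
    exact ψ.repr.symm.toContinuousLinearEquiv.hasFDerivAt.comp_hasDerivAt t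
      (hasDerivAt_waveCoeff_lp hlam hA hA2 hB2 t)
  · have hweight : ∀ᵐ x ∂(volume.restrict (Ioo (0:ℝ) 1)),
        Real.exp ((1/2) * ∫ s in (0:ℝ)..x, p s) ^ 2 ≤ Real.exp (∫ x in Ioo (0:ℝ) 1, |p x|) := by
      filter_upwards [ae_restrict_mem measurableSet_Ioo] with x hx
      rw [← Real.exp_nat_mul, Real.exp_le_exp]
      have := intervalIntegral_le_setIntegral_abs hp hx.1.le fun y hy => ⟨hy.1, hy.2.trans_lt hx.2⟩
      push_cast
      linarith
    calc (∫ x in Ioo (0:ℝ) 1, (w t x) ^ 2)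
        ≤ Real.exp (∫ x in Ioo (0:ℝ) 1, |p x|) * ‖v' t‖ ^ 2 :=
          Lp.integral_sq_le_of_ae_eq_mul _ hweight (hw t)
      _ ≤ _ := by
          rw [hv'_repr, LinearIsometryEquiv.norm_map, mul_comm 2, mul_assoc]
          gcongr
          exact norm_sq_waveCoeffDeriv_lp_le hlam₀ hA2 hB2 t

/-- Differentiability in time of the Fourier-series solution and the estimate
`‖∂ₜu(t,·)‖²_{L²} = ‖g⁻¹ v'(t)‖²_{L²} ≤ 2 exp(‖p‖_{L¹}) (Σₙ λₙ|Aₙ|² + Σₙ |Bₙ|²)`. -/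
theorem stmt_10
    (ψ : HilbertBasis ℕ ℝ (Lp ℝ 2 (volume.restrict (Ioo (0:ℝ) 1))))
    (lam : ℕ → ℝ) (hlam : ∀ n, 1 ≤ lam n)
    (p : ℝ → ℝ) (hp : IntegrableOn p (Ioo (0:ℝ) 1))
    (g : ℝ → ℝ) (hg : ∀ x, g x = Real.exp (-(1/2) * ∫ t in (0:ℝ)..x, p t))
    (u₀ u₁ : ℝ → ℝ)
    (hu₀ : MemLp u₀ 2 (volume.restrict (Ioo (0:ℝ) 1)))
    (hu₁ : MemLp u₁ 2 (volume.restrict (Ioo (0:ℝ) 1)))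
    (gu₀ gu₁ : Lp ℝ 2 (volume.restrict (Ioo (0:ℝ) 1)))
    (hgu₀ : ∀ᵐ x ∂(volume.restrict (Ioo (0:ℝ) 1)), gu₀ x = g x * u₀ x)
    (hgu₁ : ∀ᵐ x ∂(volume.restrict (Ioo (0:ℝ) 1)), gu₁ x = g x * u₁ x)
    (A B : ℕ → ℝ)
    (hA : ∀ n, A n = ⟪gu₀, ψ n⟫) (hB : ∀ n, B n = ⟪gu₁, ψ n⟫)
    (hA2 : Summable fun n => lam n * (A n) ^ 2)
    (v v' : ℝ → Lp ℝ 2 (volume.restrict (Ioo (0:ℝ) 1)))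
    (hv : ∀ t, v t = ∑' n,
      (A n * Real.cos (Real.sqrt (lam n) * t)
        + (Real.sqrt (lam n))⁻¹ * B n * Real.sin (Real.sqrt (lam n) * t)) • ψ n)
    (hv' : ∀ t, v' t = ∑' n,
      (-(Real.sqrt (lam n)) * A n * Real.sin (Real.sqrt (lam n) * t)
        + B n * Real.cos (Real.sqrt (lam n) * t)) • ψ n)
    (w : ℝ → ℝ → ℝ)
    (hw : ∀ t, ∀ᵐ x ∂(volume.restrict (Ioo (0:ℝ) 1)),
      w t x = Real.exp ((1/2) * ∫ s in (0:ℝ)..x, p s) * (v' t) x) :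
    (∀ t, HasDerivAt v (v' t) t) ∧
    ∀ t, (∫ x in Ioo (0:ℝ) 1, (w t x) ^ 2) ≤
      2 * Real.exp (∫ x in Ioo (0:ℝ) 1, |p x|) *
        ((∑' n, lam n * (A n) ^ 2) + ∑' n, (B n) ^ 2) :=
  stmt_10_general ψ lam hlam p hp gu₁ A B hB hA2 v v' hv hv' w hw
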